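/- Let k₁, k₂ ≥ 1, k = k₁ + k₂, N = M^k, N₁ = M^{k₁}, N₂ = M^{k₂}. Then t_k = (1/N) Σ_{c,d ∈ C_{k₁}} Σ_{e,f ∈ C_{k₂}} exp(2πi(e−f)(c−d)/N)·|F_{N₁}(1_{C_{k₁}})(c−d)|²·|F_{N₂}(1_{C_{k₂}})(e−f)|², where c−d is taken in Z_{N₁} and e−f in Z_{N₂}, and in the exponential e−f and c−d are represented by integers. -/

import Mathlib

open scoped BigOperators

/-- The Cantor iterates `C_k = {Σ_{j<k} a_j M^j : a_j ∈ A} ⊆ {0,…,M^k-1}`. -/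
def Ck (M : ℕ) (A : Finset ℕ) (k : ℕ) : Finset ℕ :=
  (Fintype.piFinset fun _ : Fin k => A).image fun a => ∑ j : Fin k, a j * M ^ (j : ℕ)

/-- The discrete Fourier transform of the indicator function of `S ⊆ Z_N`,
`F_N(1_S)(m) = N^{-1/2} Σ_{l<N} 1_S(l) exp(-2πi m l / N)`; it is `N`-periodic in `m`,
so a residue `m ∈ Z_N` may be fed in via any integer representative. -/
noncomputable def dftInd (N : ℕ) (S : Finset ℕ) (m : ℕ) : ℂ :=
  ((1 : ℝ) / Real.sqrt N : ℝ) * ∑ l ∈ Finset.range N,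
    (if l ∈ S then (1 : ℂ) else 0) * Complex.exp (-(2 * (Real.pi : ℂ) * Complex.I * m * l) / N)

/-- `t_k = (1/N) Σ_{j,ℓ ∈ Z_N} 1_{C_k}(j) 1_{C_k}(ℓ) |F_N(1_{C_k})(ℓ-j)|²`, `N = M^k`,
where `ℓ - j` is taken in `Z_N` (represented by `ℓ + N - j ≡ ℓ - j (mod N)`). -/
noncomputable def tk (M : ℕ) (A : Finset ℕ) (k : ℕ) : ℝ :=
  ((1 : ℝ) / ((M ^ k : ℕ) : ℝ)) * ∑ j ∈ Finset.range (M ^ k), ∑ l ∈ Finset.range (M ^ k),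
    (if j ∈ Ck M A k then (1 : ℝ) else 0) * (if l ∈ Ck M A k then (1 : ℝ) else 0) *
      ‖dftInd (M ^ k) (Ck M A k) (l + M ^ k - j)‖ ^ 2

/-- The additive energy of `X ⊆ Z_N`. -/
def addE (N : ℕ) (X : Finset ℕ) : ℕ :=
  (((X ×ˢ X) ×ˢ (X ×ˢ X)).filter fun p => (p.1.1 + p.1.2) % N = (p.2.1 + p.2.2) % N).card

/-!
Since `|F_N(1_C)(m)|² = N⁻¹ Σ_{x,y ∈ C} e_N(m(x - y))` with `e_N(x) = exp(2πix/N)`, `t_k` is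
`N⁻² Σ e_N((ℓ - j)(x - y))` over `j, ℓ, x, y ∈ C_k`. Every element of `C_{k₁+k₂}` is uniquely
of the form `c + N₁e`, and also uniquely `e' + N₂c'`, with `c, c' ∈ C_{k₁}` and `e, e' ∈ C_{k₂}`;
hence `ℓ - j = u + N₁v` and `x - y = v' + N₂u'` with `u, u'` differences in `C_{k₁}` and `v, v'` differences in `C_{k₂}`.
Modulo `N = N₁N₂` the phase is `uv' + N₂uu' + N₁vv'`; exchanging `v` and `v'` makes it
`uv + N₂uu' + N₁vv'`, and the sums over `u'` and `v'` are then the two smaller Fourier factors.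
-/

open Finset

noncomputable def expPhase (N : ℕ) (x : ℤ) : ℂ :=
  Complex.exp (2 * Real.pi * Complex.I * x / N)

lemma expPhase_add (N : ℕ) (x y : ℤ) : expPhase N (x + y) = expPhase N x * expPhase N y := by
  rw [expPhase, expPhase, expPhase, ← Complex.exp_add]
  push_cast
  ring_nf

lemma expPhase_add_natCast_mul (N : ℕ) (x t : ℤ) : expPhase N (x + N * t) = expPhase N x := by
  rcases eq_or_ne N 0 with rfl | hN
  · simp
  have h : expPhase N (N * t) = 1 := by
    rw [expPhase, ← Complex.exp_int_mul_two_pi_mul_I t]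
    push_cast
    field_simp
  rw [expPhase_add, h, mul_one]

lemma conj_expPhase (N : ℕ) (x : ℤ) : starRingEnd ℂ (expPhase N x) = expPhase N (-x) := by
  rw [expPhase, expPhase, ← Complex.exp_conj]
  simp only [map_div₀, map_mul, Complex.conj_I, Complex.conj_ofReal, map_ofNat, map_intCast,
    map_natCast]
  push_cast
  ring_nf

lemma expPhase_mul_mul_left (N₁ : ℕ) {N₂ : ℕ} (hN₂ : N₂ ≠ 0) (x : ℤ) :
    expPhase (N₁ * N₂) (N₂ * x) = expPhase N₁ x := by
  rw [expPhase, expPhase]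
  congr 1
  push_cast
  field_simp

lemma expPhase_mul_mul_right {N₁ : ℕ} (hN₁ : N₁ ≠ 0) (N₂ : ℕ) (x : ℤ) :
    expPhase (N₁ * N₂) (N₁ * x) = expPhase N₂ x := by
  rw [mul_comm, expPhase_mul_mul_left _ hN₁]

section PairDiffSum

variable {R : Type*}

def pairDiffSum [AddCommMonoid R] (S : Finset ℕ) (g : ℤ → R) : R :=
  ∑ x ∈ S, ∑ y ∈ S, g (x - y)

lemma pairDiffSum_comm [AddCommMonoid R] (S T : Finset ℕ) (g : ℤ → ℤ → R) :
    (pairDiffSum S fun u => pairDiffSum T (g u)) =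
      pairDiffSum T fun v => pairDiffSum S fun u => g u v := by
  calc _ = ∑ p ∈ S ×ˢ S, ∑ q ∈ T ×ˢ T, g (p.1 - p.2) (q.1 - q.2) := by
        simp only [pairDiffSum, sum_product]
    _ = ∑ q ∈ T ×ˢ T, ∑ p ∈ S ×ˢ S, g (p.1 - p.2) (q.1 - q.2) := sum_comm
    _ = _ := by simp only [pairDiffSum, sum_product]

lemma mul_pairDiffSum [NonUnitalNonAssocSemiring R] (c : R) (S : Finset ℕ) (g : ℤ → R) :
    c * pairDiffSum S g = pairDiffSum S fun u => c * g u := by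
  simp only [pairDiffSum, mul_sum]

lemma pairDiffSum_mul_pairDiffSum [NonUnitalNonAssocSemiring R] (S T : Finset ℕ)
    (g h : ℤ → R) :
    pairDiffSum S g * pairDiffSum T h =
      pairDiffSum S fun u => pairDiffSum T fun v => g u * h v := by
  simp only [pairDiffSum, sum_mul]
  simp only [mul_sum]

end PairDiffSum

section Cantor

variable {M : ℕ} {A : Finset ℕ}

lemma mem_Ck {k x : ℕ} :
    x ∈ Ck M A k ↔ ∃ a : Fin k → ℕ, (∀ j, a j ∈ A) ∧ ∑ j : Fin k, a j * M ^ (j : ℕ) = x := by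
  simp [Ck, Fintype.mem_piFinset]

lemma sum_append_mul_pow {k₁ k₂ : ℕ} (b : Fin k₁ → ℕ) (g : Fin k₂ → ℕ) :
    ∑ j : Fin (k₁ + k₂), Fin.append b g j * M ^ (j : ℕ) =
      ∑ j : Fin k₁, b j * M ^ (j : ℕ) + M ^ k₁ * ∑ j : Fin k₂, g j * M ^ (j : ℕ) := by
  simp [Fin.sum_univ_add, pow_add, mul_sum, mul_left_comm]

lemma Ck_add (k₁ k₂ : ℕ) :
    Ck M A (k₁ + k₂) = (Ck M A k₁ ×ˢ Ck M A k₂).image fun p => p.1 + M ^ k₁ * p.2 := by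
  ext x
  constructor
  · rw [mem_Ck]
    rintro ⟨a, ha, rfl⟩
    rw [← Fin.append_castAdd_natAdd (f := a), sum_append_mul_pow]
    exact mem_image.2 ⟨(_, _), mem_product.2
      ⟨mem_Ck.2 ⟨fun i => a (Fin.castAdd k₂ i), fun _ => ha _, rfl⟩,
        mem_Ck.2 ⟨fun i => a (Fin.natAdd k₁ i), fun _ => ha _, rfl⟩⟩, rfl⟩
  · simp only [mem_image, mem_product, Prod.exists]
    rintro ⟨c, e, ⟨hc, he⟩, rfl⟩
    obtain ⟨b, hb, rfl⟩ := mem_Ck.1 hc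
    obtain ⟨g, hg, rfl⟩ := mem_Ck.1 he
    exact mem_Ck.2 ⟨Fin.append b g, Fin.addCases (by simpa) (by simpa), sum_append_mul_pow b g⟩

lemma Ck_zero : Ck M A 0 = {0} := by
  ext x
  simp [mem_Ck, eq_comm]

lemma Ck_one : Ck M A 1 = A := by
  ext x
  simp only [mem_Ck, Fin.sum_univ_one, Fin.val_zero, pow_zero, mul_one]
  exact ⟨fun ⟨a, ha, hx⟩ => hx ▸ ha 0, fun hx => ⟨fun _ => x, fun _ => hx, rfl⟩⟩

lemma Ck_subset_range (hA : A ⊆ range M) (k : ℕ) : Ck M A k ⊆ range (M ^ k) := by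
  induction k with
  | zero => simp [Ck_zero]
  | succ k ih =>
    rw [Ck_add, Ck_one]
    intro x hx
    simp only [mem_image, mem_product, Prod.exists] at hx
    obtain ⟨c, e, ⟨hc, he⟩, rfl⟩ := hx
    have hc := mem_range.1 (ih hc)
    have he := mem_range.1 (hA he)
    rw [mem_range, pow_succ]
    nlinarith

variable {R : Type*} [AddCommMonoid R]

lemma sum_Ck_add (hA : A ⊆ range M) (k₁ k₂ : ℕ) (g : ℕ → R) :
    ∑ x ∈ Ck M A (k₁ + k₂), g x = ∑ c ∈ Ck M A k₁, ∑ e ∈ Ck M A k₂, g (c + M ^ k₁ * e) := by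
  rw [Ck_add, sum_image, sum_product]
  rintro ⟨c, e⟩ hce ⟨c', e'⟩ hce' h
  simp only [coe_product, Set.mem_prod, mem_coe] at hce hce' h
  have hc := mem_range.1 (Ck_subset_range hA k₁ hce.1)
  have hc' := mem_range.1 (Ck_subset_range hA k₁ hce'.1)
  obtain rfl : c = c' := by
    simpa [Nat.add_mul_mod_self_left, Nat.mod_eq_of_lt hc, Nat.mod_eq_of_lt hc'] using
      congrArg (· % M ^ k₁) h
  rw [Nat.eq_of_mul_eq_mul_left (by omega) (Nat.add_left_cancel h)]

lemma pairDiffSum_Ck_add (hA : A ⊆ range M) (k₁ k₂ : ℕ) (g : ℤ → R) :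
    pairDiffSum (Ck M A (k₁ + k₂)) g =
      pairDiffSum (Ck M A k₁) fun u =>
        pairDiffSum (Ck M A k₂) fun v => g (u + (M ^ k₁ : ℕ) * v) := by
  simp only [pairDiffSum, sum_Ck_add hA]
  refine sum_congr rfl fun c _ => ?_
  rw [sum_comm]
  refine sum_congr rfl fun d _ => sum_congr rfl fun e _ => sum_congr rfl fun f _ => ?_
  push_cast
  ring_nf

end Cantor

section Fourier

variable {N : ℕ} {S : Finset ℕ}

lemma sum_range_ite_mem_mul {R : Type*} [NonAssocSemiring R] (hS : S ⊆ range N) (g : ℕ → R) :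
    ∑ l ∈ range N, (if l ∈ S then 1 else 0) * g l = ∑ l ∈ S, g l := by
  simp only [ite_mul, one_mul, zero_mul]
  rw [sum_ite_mem, inter_eq_right.2 hS]

lemma dftInd_eq_sum_expPhase (hS : S ⊆ range N) (m : ℕ) :
    dftInd N S m = ((1 / Real.sqrt N : ℝ) : ℂ) * ∑ l ∈ S, expPhase N (-(m * l)) := by
  rw [dftInd, sum_range_ite_mem_mul hS]
  congr 2 with l
  rw [expPhase]
  push_cast
  ring_nf

lemma ofReal_norm_dftInd_sq (hS : S ⊆ range N) (m : ℕ) :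
    (‖dftInd N S m‖ : ℂ) ^ 2 = 1 / N * pairDiffSum S fun w => expPhase N (m * w) := by
  have hscale : ((1 / Real.sqrt N : ℝ) : ℂ) * ((1 / Real.sqrt N : ℝ) : ℂ) = 1 / N := by
    rw [← Complex.ofReal_mul, div_mul_div_comm, one_mul, Real.mul_self_sqrt N.cast_nonneg]
    push_cast
    rfl
  rw [← Complex.conj_mul', dftInd_eq_sum_expPhase hS, map_mul, Complex.conj_ofReal, map_sum,
    mul_mul_mul_comm, hscale, sum_mul_sum, pairDiffSum]
  simp only [conj_expPhase, neg_neg, ← expPhase_add]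
  ring_nf

lemma ofReal_norm_dftInd_sub_sq (hS : S ⊆ range N) (a : ℕ) {b : ℕ} (hb : b ≤ N) :
    (‖dftInd N S (a + N - b)‖ : ℂ) ^ 2 =
      1 / N * pairDiffSum S fun w => expPhase N ((a - b) * w) := by
  rw [ofReal_norm_dftInd_sq hS]
  congr 2 with w
  rw [← expPhase_add_natCast_mul N ((a - b) * w) w]
  congr 1
  push_cast [hb.trans (N.le_add_left a)]
  ring

end Fourier

lemma ofReal_tk {M : ℕ} {A : Finset ℕ} (hA : A ⊆ range M) (k : ℕ) :
    (tk M A k : ℂ) = 1 / ((M ^ k : ℕ) : ℂ) ^ 2 *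
      pairDiffSum (Ck M A k) fun u => pairDiffSum (Ck M A k) fun w => expPhase (M ^ k) (u * w) := by
  have hC := Ck_subset_range hA k
  simp only [tk, mul_assoc, ← mul_sum, sum_range_ite_mem_mul hC]
  set N := M ^ k
  push_cast
  rw [sum_comm, pairDiffSum, mul_sum, mul_sum]
  refine sum_congr rfl fun l _ => ?_
  rw [sum_congr rfl fun j hj => ofReal_norm_dftInd_sub_sq hC l (mem_range.1 (hC hj)).le,
    ← mul_sum, ← mul_assoc]
  ring

lemma ofReal_tk_add {M : ℕ} {A : Finset ℕ} (hA : A ⊆ range M) (k₁ k₂ : ℕ) :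
    (tk M A (k₁ + k₂) : ℂ) = 1 / ((M ^ k₁ * M ^ k₂ : ℕ) : ℂ) ^ 2 *
      pairDiffSum (Ck M A k₁) fun u => pairDiffSum (Ck M A k₂) fun v =>
        pairDiffSum (Ck M A k₁) fun u' => pairDiffSum (Ck M A k₂) fun v' =>
          expPhase (M ^ k₁ * M ^ k₂)
            (v * u + (M ^ k₂ : ℕ) * (u * u') + (M ^ k₁ : ℕ) * (v * v')) := by
  have hsplit (g : ℤ → ℂ) : pairDiffSum (Ck M A (k₁ + k₂)) g =
      pairDiffSum (Ck M A k₂) fun v' =>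
        pairDiffSum (Ck M A k₁) fun u' => g (v' + (M ^ k₂ : ℕ) * u') := by
    rw [add_comm]
    exact pairDiffSum_Ck_add hA k₂ k₁ g
  rw [ofReal_tk hA, pairDiffSum_Ck_add hA k₁ k₂]
  simp only [hsplit, pow_add]
  refine congrArg (_ * ·) (congrArg _ (funext fun u => ?_))
  rw [pairDiffSum_comm]
  refine congrArg _ (funext fun v' => ?_)
  rw [pairDiffSum_comm]
  refine congrArg _ (funext fun u' => congrArg _ (funext fun v => ?_))
  set N₁ := M ^ k₁
  set N₂ := M ^ k₂
  rw [show (u + N₁ * v) * (v' + N₂ * u') =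
      v' * u + N₂ * (u * u') + N₁ * (v' * v) + (N₁ * N₂ : ℕ) * (v * u') by push_cast; ring,
    expPhase_add_natCast_mul]

section Factorization

variable {N₁ N₂ : ℕ} {S T : Finset ℕ}

lemma expPhase_mul_pairDiffSum_mul_pairDiffSum (hN₁ : N₁ ≠ 0) (hN₂ : N₂ ≠ 0) (u v : ℤ) :
    expPhase (N₁ * N₂) (v * u) * (1 / N₁ * pairDiffSum S fun u' => expPhase N₁ (u * u')) *
        (1 / N₂ * pairDiffSum T fun v' => expPhase N₂ (v * v')) =
      1 / ((N₁ * N₂ : ℕ) : ℂ) * pairDiffSum S fun u' => pairDiffSum T fun v' =>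
        expPhase (N₁ * N₂) (v * u + N₂ * (u * u') + N₁ * (v * v')) := by
  rw [mul_pairDiffSum (1 / _ : ℂ), mul_pairDiffSum (1 / _ : ℂ), mul_pairDiffSum (expPhase _ _),
    pairDiffSum_mul_pairDiffSum, mul_pairDiffSum]
  refine congrArg _ (funext fun u' => ?_)
  rw [mul_pairDiffSum]
  refine congrArg _ (funext fun v' => ?_)
  rw [expPhase_add, expPhase_add, expPhase_mul_mul_left N₁ hN₂, expPhase_mul_mul_right hN₁ N₂]
  push_cast
  ring

lemma sum_exp_mul_norm_dftInd_sq_mul_norm_dftInd_sq (hN₁ : N₁ ≠ 0) (hN₂ : N₂ ≠ 0)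
    (hS : S ⊆ range N₁) (hT : T ⊆ range N₂) :
    1 / ((N₁ * N₂ : ℕ) : ℂ) * ∑ c ∈ S, ∑ d ∈ S, ∑ e ∈ T, ∑ f ∈ T,
        Complex.exp (2 * (Real.pi : ℂ) * Complex.I * ((e : ℂ) - (f : ℂ)) *
            ((c : ℂ) - (d : ℂ)) / ((N₁ * N₂ : ℕ) : ℂ)) *
          ((‖dftInd N₁ S (c + N₁ - d)‖ ^ 2 : ℝ) : ℂ) *
          ((‖dftInd N₂ T (e + N₂ - f)‖ ^ 2 : ℝ) : ℂ) =
      1 / ((N₁ * N₂ : ℕ) : ℂ) ^ 2 *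
        pairDiffSum S fun u => pairDiffSum T fun v => pairDiffSum S fun u' =>
          pairDiffSum T fun v' => expPhase (N₁ * N₂) (v * u + N₂ * (u * u') + N₁ * (v * v')) := by
  calc _ = 1 / ((N₁ * N₂ : ℕ) : ℂ) * pairDiffSum S fun u => pairDiffSum T fun v =>
          expPhase (N₁ * N₂) (v * u) * (1 / N₁ * pairDiffSum S fun u' => expPhase N₁ (u * u')) *
            (1 / N₂ * pairDiffSum T fun v' => expPhase N₂ (v * v')) := by
        refine congrArg (1 / ((N₁ * N₂ : ℕ) : ℂ) * ·) (sum_congr rfl fun c _ =>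
          sum_congr rfl fun d hd => sum_congr rfl fun e _ => sum_congr rfl fun f hf => ?_)
        dsimp only
        rw [Complex.ofReal_pow, Complex.ofReal_pow,
          ofReal_norm_dftInd_sub_sq hS c (mem_range.1 (hS hd)).le,
          ofReal_norm_dftInd_sub_sq hT e (mem_range.1 (hT hf)).le, expPhase]
        push_cast
        ring_nf
    _ = _ := by
        simp only [expPhase_mul_pairDiffSum_mul_pairDiffSum hN₁ hN₂]
        rw [sq, ← one_div_mul_one_div, mul_assoc]
        refine congrArg (1 / ((N₁ * N₂ : ℕ) : ℂ) * ·) ?_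
        rw [mul_pairDiffSum]
        refine congrArg _ (funext fun u => ?_)
        rw [mul_pairDiffSum]

end Factorization

theorem stmt4_general (M : ℕ) (hM : 2 ≤ M) (A : Finset ℕ) (hA : A ⊆ Finset.range M)
    (k₁ k₂ : ℕ) :
    (tk M A (k₁ + k₂) : ℂ) =
      ((1 : ℂ) / ((M ^ (k₁ + k₂) : ℕ) : ℂ)) *
        ∑ c ∈ Ck M A k₁, ∑ d ∈ Ck M A k₁, ∑ e ∈ Ck M A k₂, ∑ f ∈ Ck M A k₂,
          Complex.exp (2 * (Real.pi : ℂ) * Complex.I * ((e : ℂ) - (f : ℂ)) *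
              ((c : ℂ) - (d : ℂ)) / ((M ^ (k₁ + k₂) : ℕ) : ℂ)) *
            ((‖dftInd (M ^ k₁) (Ck M A k₁) (c + M ^ k₁ - d)‖ ^ 2 : ℝ) : ℂ) *
            ((‖dftInd (M ^ k₂) (Ck M A k₂) (e + M ^ k₂ - f)‖ ^ 2 : ℝ) : ℂ) := by
  have hM₀ : M ≠ 0 := by omega
  rw [ofReal_tk_add hA, pow_add, sum_exp_mul_norm_dftInd_sq_mul_norm_dftInd_sq
    (pow_ne_zero k₁ hM₀) (pow_ne_zero k₂ hM₀) (Ck_subset_range hA k₁) (Ck_subset_range hA k₂)]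

/-- For `k = k₁ + k₂`, `N = M^k`, `N₁ = M^{k₁}`, `N₂ = M^{k₂}`:
`t_k = (1/N) Σ_{c,d ∈ C_{k₁}} Σ_{e,f ∈ C_{k₂}} exp(2πi(e-f)(c-d)/N)
· |F_{N₁}(1_{C_{k₁}})(c-d)|² · |F_{N₂}(1_{C_{k₂}})(e-f)|²`,
where in the exponential `e - f`, `c - d` are integer differences of the representatives,
and in the Fourier factors `c - d` is taken in `Z_{N₁}` (via the representative
`c + N₁ - d`) and `e - f` in `Z_{N₂}` (via `e + N₂ - f`). -/
theorem stmt4 (M : ℕ) (hM : 2 ≤ M) (A : Finset ℕ) (hA : A ⊆ Finset.range M)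
    (k₁ k₂ : ℕ) (hk₁ : 1 ≤ k₁) (hk₂ : 1 ≤ k₂) :
    (tk M A (k₁ + k₂) : ℂ) =
      ((1 : ℂ) / ((M ^ (k₁ + k₂) : ℕ) : ℂ)) *
        ∑ c ∈ Ck M A k₁, ∑ d ∈ Ck M A k₁, ∑ e ∈ Ck M A k₂, ∑ f ∈ Ck M A k₂,
          Complex.exp (2 * (Real.pi : ℂ) * Complex.I * ((e : ℂ) - (f : ℂ)) *
              ((c : ℂ) - (d : ℂ)) / ((M ^ (k₁ + k₂) : ℕ) : ℂ)) *
            ((‖dftInd (M ^ k₁) (Ck M A k₁) (c + M ^ k₁ - d)‖ ^ 2 : ℝ) : ℂ) *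
            ((‖dftInd (M ^ k₂) (Ck M A k₂) (e + M ^ k₂ - f)‖ ^ 2 : ℝ) : ℂ) :=
  stmt4_general M hM A hA k₁ k₂
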